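/- Let p > 0, let ν be a probability measure on ℝ with 0 < ∫_ℝ |x|^p dν(x) < ∞, and define the set of pairs F_ν = {(φ_ν(τ), (1 − v_p(B_τ))^{1/p}) : τ ≥ 0} ∪ {(ν(C_τ) + α·ν({−τ,τ}), (1 − v_p(C_τ) − α·v_p({−τ,τ}))^{1/p}) : τ ≥ 0 with ν({−τ,τ}) > 0, α ∈ [0,1)}. Then F_ν is the graph of a function from (0,1] to [0,1): for every r ∈ (0,1] there exists exactly one d ∈ [0,1) such that (r,d) ∈ F_ν. -/

import Mathlib

open MeasureTheory Filter Set
open scoped ENNReal Topology Classical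

noncomputable section

/-- Left shift on real sequences. -/
def shift : (ℕ → ℝ) → (ℕ → ℝ) := fun x n => x (n + 1)

/-- First `n` coordinates of a sequence. -/
def proj (n : ℕ) (x : ℕ → ℝ) : Fin n → ℝ := fun i => x i

/-- Best `k`-term `ℓp`-approximation error of `x ∈ ℝ^n`. -/
def sigmaP (p : ℝ) (n k : ℕ) (x : Fin n → ℝ) : ℝ :=
  sInf {e : ℝ | ∃ S : Finset (Fin n), S.card = k ∧ e = (∑ i ∈ Sᶜ, |x i| ^ p) ^ (1 / p)}

/-- Relative best `k`-term `ℓp`-approximation error. -/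
def sigmaTilde (p : ℝ) (n k : ℕ) (x : Fin n → ℝ) : ℝ :=
  sigmaP p n k x / (∑ i, |x i| ^ p) ^ (1 / p)

/-- The set `A^{n,k}_d` of vectors with relative approximation error at most `d`. -/
def Ad (p : ℝ) (n k : ℕ) (d : ℝ) : Set (Fin n → ℝ) := {x | sigmaTilde p n k x ≤ d}

/-- `μ_n`: law of the first `n` coordinates. -/
def lawn (μ : Measure (ℕ → ℝ)) (n : ℕ) : Measure (Fin n → ℝ) := μ.map (proj n)

/-- Strong `ℓp`-characterization with constant limiting function `f : (0,1] → [0,1]`. -/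
def StrongLpChar (p : ℝ) (μ : Measure (ℕ → ℝ)) (f : ℝ → ℝ) : Prop :=
  (∀ r ∈ Set.Ioc (0:ℝ) 1, f r ∈ Set.Icc (0:ℝ) 1) ∧
  ∀ r ∈ Set.Ioc (0:ℝ) 1, ∀ k : ℕ → ℕ,
    Tendsto (fun n : ℕ => (k n : ℝ) / n) atTop (𝓝 r) →
    ∀ᵐ x ∂μ, Tendsto (fun n : ℕ => sigmaTilde p n (k n) (proj n x)) atTop (𝓝 (f r))

/-- `κ̃_p(d, ε, μ_n)`. -/
def kappaP (p : ℝ) (μ : Measure (ℕ → ℝ)) (d ε : ℝ) (n : ℕ) : ℕ :=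
  sInf {k : ℕ | 1 ≤ k ∧ k ≤ n ∧ 1 - ε ≤ (lawn μ n (Ad p n k d)).toReal}

/-- `r̃⁺_p(d, ε, μ)`. -/
def rTildePlus (p : ℝ) (μ : Measure (ℕ → ℝ)) (d ε : ℝ) : ℝ :=
  Filter.limsup (fun n : ℕ => (kappaP p μ d ε n : ℝ) / n) atTop

/-- `r̃⁻_p(d, ε, μ)`. -/
def rTildeMinus (p : ℝ) (μ : Measure (ℕ → ℝ)) (d ε : ℝ) : ℝ :=
  Filter.liminf (fun n : ℕ => (kappaP p μ d ε n : ℝ) / n) atTop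

/-- `(r, d)` is `ℓp`-achievable with probability `ε`. -/
def Achievable (p : ℝ) (μ : Measure (ℕ → ℝ)) (d ε r : ℝ) : Prop :=
  ∃ k : ℕ → ℕ, Filter.limsup (fun n : ℕ => (k n : ℝ) / n) atTop ≤ r ∧
    1 - ε ≤ Filter.liminf (fun n : ℕ => (lawn μ n (Ad p n (k n) d)).toReal) atTop

/-- `r_p(d, ε, μ)`: the rate-approximation error function. -/
def rOp (p : ℝ) (μ : Measure (ℕ → ℝ)) (d ε : ℝ) : ℝ :=
  sInf {r : ℝ | r ∈ Set.Icc (0:ℝ) 1 ∧ Achievable p μ d ε r}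

/-- `μ` is AMS with stationary mean `ν`. -/
def HasStationaryMean (μ ν : Measure (ℕ → ℝ)) : Prop :=
  ∀ F : Set (ℕ → ℝ), MeasurableSet F →
    Tendsto (fun n : ℕ => (∑ i ∈ Finset.range n, (μ (shift^[i] ⁻¹' F)).toReal) / n)
      atTop (𝓝 (ν F).toReal)

/-- `μ` is asymptotically mean stationary. -/
def IsAMS (μ : Measure (ℕ → ℝ)) : Prop :=
  ∀ F : Set (ℕ → ℝ), MeasurableSet F →
    ∃ L : ℝ, Tendsto (fun n : ℕ => (∑ i ∈ Finset.range n, (μ (shift^[i] ⁻¹' F)).toReal) / n)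
      atTop (𝓝 L)

/-- `ν` is stationary with respect to the shift. -/
def IsStationaryShift (ν : Measure (ℕ → ℝ)) : Prop :=
  ∀ F : Set (ℕ → ℝ), MeasurableSet F → ν (shift ⁻¹' F) = ν F

/-- `μ` is ergodic with respect to the shift. -/
def IsErgodicShift (μ : Measure (ℕ → ℝ)) : Prop :=
  ∀ F : Set (ℕ → ℝ), MeasurableSet F → shift ⁻¹' F = F → μ F = 0 ∨ μ F = 1

/-- 1D marginal: the law of the first coordinate. -/
def marginal1 (ν : Measure (ℕ → ℝ)) : Measure ℝ := ν.map (fun x => x 0)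

/-- The `p`-th absolute moment `∫ |x|^p dν` (as an extended real). -/
def momentP (p : ℝ) (ν : Measure ℝ) : ℝ≥0∞ := ∫⁻ x, ENNReal.ofReal (|x| ^ p) ∂ν

/-- Tail set `B_τ = (−∞,−τ] ∪ [τ,∞)`. -/
def Btau (τ : ℝ) : Set ℝ := Set.Iic (-τ) ∪ Set.Ici τ

/-- Tail set `C_τ = (−∞,−τ) ∪ (τ,∞)`. -/
def Ctau (τ : ℝ) : Set ℝ := Set.Iio (-τ) ∪ Set.Ioi τ

/-- Tail distribution function `φ_ν(τ) = ν(B_τ)`. -/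
def phiTail (ν : Measure ℝ) (τ : ℝ) : ℝ := (ν (Btau τ)).toReal

/-- `v_p(B) = (∫_B |x|^p dν) / (∫_ℝ |x|^p dν)`. -/
def vP (p : ℝ) (ν : Measure ℝ) (B : Set ℝ) : ℝ :=
  ((∫⁻ x in B, ENNReal.ofReal (|x| ^ p) ∂ν) / momentP p ν).toReal

/-- The rate vs approximation error graph `F_ν`. -/
def Fgraph (p : ℝ) (ν : Measure ℝ) : Set (ℝ × ℝ) :=
  {q | ∃ τ : ℝ, 0 ≤ τ ∧ q = (phiTail ν τ, (1 - vP p ν (Btau τ)) ^ (1 / p))} ∪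
  {q | ∃ τ : ℝ, 0 ≤ τ ∧ 0 < (ν ({-τ, τ} : Set ℝ)).toReal ∧
       ∃ α ∈ Set.Ico (0:ℝ) 1,
         q = ((ν (Ctau τ)).toReal + α * (ν ({-τ, τ} : Set ℝ)).toReal,
              (1 - vP p ν (Ctau τ) - α * vP p ν ({-τ, τ} : Set ℝ)) ^ (1 / p))}

/-- Approximation error function `f_{p,ν} : (0,1] → [0,1)`, defined through its graph `F_ν`,
with the convention `f_{p,ν} ≡ 0` when the `p`-th moment of `ν` is infinite. -/
def fApprox (p : ℝ) (ν : Measure ℝ) (r : ℝ) : ℝ :=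
  if momentP p ν = ∞ then 0 else sSup {d : ℝ | (r, d) ∈ Fgraph p ν}

/-!
Every point of `F_ν` has the form `(∫ w dν, (1 - ∫ w |x|^p dν / ∫ |x|^p dν)^(1/p))` for a
threshold weight `w` equal to `1` on `C_τ`, to `α` on `{-τ, τ}` and to `0` elsewhere, with
`τ ≥ 0` and `α ∈ [0, 1]`. Two such weights are always pointwise comparable, so if they have the
same `ν`-integral they agree `ν`-a.e. and give the same second coordinate. Conversely, every
`r ∈ (0, 1]` is attained: take for `τ` an `r`-quantile of `|x|` under `ν`, so that
`ν(C_τ) ≤ r ≤ ν(B_τ)`, and let `α` fill the gap with part of the atom `ν{-τ, τ}`. Finally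
`r > 0` forces `∫ w |x|^p dν > 0`, which puts the second coordinate in `[0, 1)`.
-/

section Quantile

variable {μ : Measure ℝ} {r : ℝ≥0∞} {τ : ℝ}

lemma measure_Ioi_le_of_forall_gt (h : ∀ t, τ < t → μ (Ici t) ≤ r) : μ (Ioi τ) ≤ r := by
  obtain ⟨u, hu_anti, hu_gt, hu_lim⟩ := exists_seq_strictAnti_tendsto τ
  rw [← iUnion_Ici_eq_Ioi_of_lt_of_tendsto hu_gt hu_lim,
    Monotone.measure_iUnion fun m n hmn ↦ Ici_subset_Ici.2 (hu_anti.antitone hmn)]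
  exact iSup_le fun n ↦ h _ (hu_gt n)

lemma le_measure_Ici_of_forall_lt [IsFiniteMeasure μ] (h : ∀ t < τ, r ≤ μ (Ici t)) :
    r ≤ μ (Ici τ) := by
  obtain ⟨u, hu_mono, hu_lt, hu_lim⟩ := exists_seq_strictMono_tendsto τ
  have hInter : ⋂ n, Ici (u n) = Ici τ := by
    simp_rw [← compl_Iio, ← compl_iUnion,
      (isLUB_of_tendsto_atTop hu_mono.monotone hu_lim).iUnion_Iio_eq]
  rw [← hInter, Antitone.measure_iInter (fun m n hmn ↦ Ici_subset_Ici.2 (hu_mono.monotone hmn))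
    (fun _ ↦ measurableSet_Ici.nullMeasurableSet) ⟨0, measure_ne_top _ _⟩]
  exact le_iInf fun n ↦ h _ (hu_lt n)

lemma tendsto_measure_Ici_atTop [IsFiniteMeasure μ] :
    Tendsto (fun t ↦ μ (Ici t)) atTop (𝓝 0) := by
  have hempty : ⋂ t : ℝ, Ici t = ∅ :=
    eq_empty_of_forall_notMem fun x hx ↦ (lt_add_one x).not_ge (mem_iInter.1 hx (x + 1))
  rw [← measure_empty (μ := μ), ← hempty]
  exact tendsto_measure_iInter_atTop (fun _ ↦ measurableSet_Ici.nullMeasurableSet)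
    (fun _ _ hst ↦ Ici_subset_Ici.2 hst) ⟨0, measure_ne_top _ _⟩

lemma exists_measure_Ioi_le_le_measure_Ici [IsFiniteMeasure μ] {a : ℝ} (hr : 0 < r)
    (ha : r ≤ μ (Ici a)) : ∃ τ, a ≤ τ ∧ μ (Ioi τ) ≤ r ∧ r ≤ μ (Ici τ) := by
  let S := {t | a ≤ t ∧ r ≤ μ (Ici t)}
  have ha_mem : a ∈ S := ⟨le_rfl, ha⟩
  obtain ⟨b, hb⟩ := eventually_atTop.1 ((tendsto_measure_Ici_atTop (μ := μ)).eventually_lt_const hr)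
  have hbdd : BddAbove S := ⟨b, fun t ht ↦ not_lt.1 fun hbt ↦ (hb t hbt.le).not_ge ht.2⟩
  refine ⟨sSup S, le_csSup hbdd ha_mem, measure_Ioi_le_of_forall_gt fun t ht ↦ ?_,
    le_measure_Ici_of_forall_lt fun t ht ↦ ?_⟩
  · by_contra! hlt
    exact ht.not_ge (le_csSup hbdd ⟨(le_csSup hbdd ha_mem).trans ht.le, hlt.le⟩)
  · obtain ⟨s, hs, hts⟩ := exists_lt_of_lt_csSup ⟨a, ha_mem⟩ ht
    exact hs.2.trans (measure_mono (Ici_subset_Ici.2 hts.le))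

end Quantile

lemma exists_add_ofReal_mul_eq {c a r : ℝ≥0∞} (ha : a ≠ ∞) (hc : c ≤ r) (hr : r ≤ c + a) :
    ∃ α ∈ Icc (0 : ℝ) 1, c + ENNReal.ofReal α * a = r := by
  rcases eq_or_ne a 0 with rfl | ha0
  · exact ⟨0, ⟨le_rfl, zero_le_one⟩, by simpa using (le_antisymm (by simpa using hr) hc).symm⟩
  have hβ : (r - c) / a ≤ 1 :=
    ENNReal.div_le_of_le_mul (by rw [one_mul]; exact tsub_le_iff_left.2 hr)
  refine ⟨((r - c) / a).toReal, ⟨ENNReal.toReal_nonneg,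
    ENNReal.toReal_le_of_le_ofReal zero_le_one (by simpa using hβ)⟩, ?_⟩
  rw [ENNReal.ofReal_toReal (ne_top_of_le_ne_top ENNReal.one_ne_top hβ),
    ENNReal.div_mul_cancel ha0 ha, add_tsub_cancel_of_le hc]

lemma lintegral_mul_eq_of_le_of_lintegral_eq {X : Type*} [MeasurableSpace X] {μ : Measure X}
    {f g : X → ℝ≥0∞} (hfg : f ≤ g) (hg : AEMeasurable g μ) (hf : ∫⁻ x, f x ∂μ ≠ ∞)
    (h : ∫⁻ x, f x ∂μ = ∫⁻ x, g x ∂μ) (k : X → ℝ≥0∞) :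
    ∫⁻ x, f x * k x ∂μ = ∫⁻ x, g x * k x ∂μ :=
  lintegral_congr_ae <| (ae_eq_of_ae_le_of_lintegral_le (ae_of_all _ hfg) hf hg h.ge).mono
    fun x hx ↦ by simp only [hx]

lemma mem_Btau {τ x : ℝ} : x ∈ Btau τ ↔ τ ≤ |x| := by
  simp only [Btau, mem_union, mem_Iic, mem_Ici, le_abs']

lemma mem_Ctau {τ x : ℝ} : x ∈ Ctau τ ↔ τ < |x| := by
  simp only [Ctau, mem_union, mem_Iio, mem_Ioi, lt_abs, lt_neg]
  exact or_comm

lemma mem_pair_neg_self {τ x : ℝ} (hτ : 0 ≤ τ) : x ∈ ({-τ, τ} : Set ℝ) ↔ |x| = τ := by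
  rw [abs_eq hτ, mem_insert_iff, mem_singleton_iff, or_comm]

lemma preimage_abs_Ici (τ : ℝ) : (|·|) ⁻¹' Ici τ = Btau τ := ext fun _ ↦ mem_Btau.symm

lemma preimage_abs_Ioi (τ : ℝ) : (|·|) ⁻¹' Ioi τ = Ctau τ := ext fun _ ↦ mem_Ctau.symm

lemma Btau_zero : Btau 0 = univ := eq_univ_of_forall fun x ↦ mem_Btau.2 (abs_nonneg x)

lemma measurableSet_Ctau (τ : ℝ) : MeasurableSet (Ctau τ) :=
  measurableSet_Iio.union measurableSet_Ioi

lemma measurableSet_pair_neg_self (τ : ℝ) : MeasurableSet ({-τ, τ} : Set ℝ) :=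
  (measurableSet_singleton τ).insert (-τ)

lemma Btau_eq_Ctau_union (τ : ℝ) : Btau τ = Ctau τ ∪ {-τ, τ} := by
  ext x
  simp only [mem_union, mem_Btau, mem_Ctau, mem_insert_iff, mem_singleton_iff]
  constructor
  · intro h
    rcases h.lt_or_eq with h | h
    · exact .inl h
    · right
      rcases abs_choice x with hx | hx
      · right; linarith
      · left; linarith
  · rintro (h | h | h)
    · exact h.le
    · rw [h, abs_neg]; exact le_abs_self τ
    · rw [h]; exact le_abs_self τ

lemma disjoint_Ctau_pair_neg_self {τ : ℝ} (hτ : 0 ≤ τ) : Disjoint (Ctau τ) {-τ, τ} :=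
  disjoint_left.2 fun _ hC hP ↦ (mem_Ctau.1 hC).ne' ((mem_pair_neg_self hτ).1 hP)

lemma measure_Btau (ν : Measure ℝ) {τ : ℝ} (hτ : 0 ≤ τ) :
    ν (Btau τ) = ν (Ctau τ) + ν {-τ, τ} := by
  rw [Btau_eq_Ctau_union, measure_union (disjoint_Ctau_pair_neg_self hτ)
    (measurableSet_pair_neg_self τ)]

lemma setLIntegral_Btau (ν : Measure ℝ) {τ : ℝ} (hτ : 0 ≤ τ) (f : ℝ → ℝ≥0∞) :
    ∫⁻ x in Btau τ, f x ∂ν = ∫⁻ x in Ctau τ, f x ∂ν + ∫⁻ x in {-τ, τ}, f x ∂ν := by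
  rw [Btau_eq_Ctau_union, lintegral_union (measurableSet_pair_neg_self τ)
    (disjoint_Ctau_pair_neg_self hτ)]

def tailWeight (τ α x : ℝ) : ℝ≥0∞ :=
  if τ < |x| then 1 else if |x| = τ then ENNReal.ofReal α else 0

section TailWeight

variable {τ τ' α α' : ℝ}

lemma measurable_tailWeight : Measurable (tailWeight τ α) :=
  Measurable.ite (measurableSet_lt measurable_const measurable_abs) measurable_const <|
    Measurable.ite (measurableSet_eq_fun measurable_abs measurable_const) measurable_const
      measurable_const

lemma tailWeight_le_one (hα : α ≤ 1) (x : ℝ) : tailWeight τ α x ≤ 1 := by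
  unfold tailWeight
  split_ifs
  exacts [le_rfl, ENNReal.ofReal_le_one.2 hα, zero_le_one]

lemma tailWeight_mono (h : α ≤ α') : tailWeight τ α ≤ tailWeight τ α' := fun x ↦ by
  unfold tailWeight
  split_ifs
  exacts [le_rfl, ENNReal.ofReal_le_ofReal h, le_rfl]

lemma tailWeight_le_of_lt (h : τ < τ') (hα' : α' ≤ 1) : tailWeight τ' α' ≤ tailWeight τ α := by
  intro x
  by_cases h₁ : τ' < |x|
  · simp only [tailWeight, if_pos h₁, if_pos (h.trans h₁), le_rfl]
  by_cases h₂ : |x| = τ'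
  · simp only [tailWeight, if_neg h₁, if_pos h₂, if_pos (h₂ ▸ h : τ < |x|)]
    exact ENNReal.ofReal_le_one.2 hα'
  · simp only [tailWeight, if_neg h₁, if_neg h₂]
    exact zero_le

lemma tailWeight_le_or_ge (hα : α ≤ 1) (hα' : α' ≤ 1) :
    tailWeight τ α ≤ tailWeight τ' α' ∨ tailWeight τ' α' ≤ tailWeight τ α := by
  rcases lt_trichotomy τ τ' with h | rfl | h
  · exact .inr (tailWeight_le_of_lt h hα')
  · exact (le_total α α').imp tailWeight_mono tailWeight_mono
  · exact .inl (tailWeight_le_of_lt h hα)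

variable (ν : Measure ℝ)

lemma lintegral_tailWeight_mul (hτ : 0 ≤ τ) {f : ℝ → ℝ≥0∞} (hf : Measurable f) :
    ∫⁻ x, tailWeight τ α x * f x ∂ν =
      ∫⁻ x in Ctau τ, f x ∂ν + ENNReal.ofReal α * ∫⁻ x in {-τ, τ}, f x ∂ν := by
  have hsplit : ∀ x, tailWeight τ α x * f x =
      (Ctau τ).indicator f x + ({-τ, τ} : Set ℝ).indicator (fun y ↦ ENNReal.ofReal α * f y) x := by
    intro x
    simp only [tailWeight, indicator, mem_Ctau, mem_pair_neg_self hτ]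
    split_ifs with h₁ h₂ <;> first | exact absurd h₂ h₁.ne' | simp
  simp_rw [hsplit]
  rw [lintegral_add_left (hf.indicator (measurableSet_Ctau τ)),
    lintegral_indicator (measurableSet_Ctau τ), lintegral_indicator (measurableSet_pair_neg_self τ),
    lintegral_const_mul _ hf]

lemma lintegral_tailWeight (hτ : 0 ≤ τ) :
    ∫⁻ x, tailWeight τ α x ∂ν = ν (Ctau τ) + ENNReal.ofReal α * ν {-τ, τ} := by
  simpa using lintegral_tailWeight_mul ν (α := α) hτ measurable_const (f := 1)

end TailWeight

section TailWeightIntegral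

variable {ν : Measure ℝ} {τ τ' α α' : ℝ}

lemma lintegral_tailWeight_ne_top [IsFiniteMeasure ν] (hα : α ≤ 1) :
    ∫⁻ x, tailWeight τ α x ∂ν ≠ ∞ :=
  ne_top_of_le_ne_top (measure_ne_top ν univ)
    ((lintegral_mono (tailWeight_le_one hα)).trans lintegral_one.le)

lemma lintegral_tailWeight_mul_congr [IsFiniteMeasure ν] (hα : α ≤ 1) (hα' : α' ≤ 1)
    (h : ∫⁻ x, tailWeight τ α x ∂ν = ∫⁻ x, tailWeight τ' α' x ∂ν) (k : ℝ → ℝ≥0∞) :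
    ∫⁻ x, tailWeight τ α x * k x ∂ν = ∫⁻ x, tailWeight τ' α' x * k x ∂ν := by
  rcases tailWeight_le_or_ge (τ := τ) (τ' := τ') hα hα' with hle | hge
  · exact lintegral_mul_eq_of_le_of_lintegral_eq hle measurable_tailWeight.aemeasurable
      (lintegral_tailWeight_ne_top hα) h k
  · exact (lintegral_mul_eq_of_le_of_lintegral_eq hge measurable_tailWeight.aemeasurable
      (lintegral_tailWeight_ne_top hα') h.symm k).symm

lemma exists_lintegral_tailWeight_eq (ν : Measure ℝ) [IsFiniteMeasure ν] {r : ℝ≥0∞}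
    (hr : 0 < r) (hrν : r ≤ ν univ) :
    ∃ τ, 0 ≤ τ ∧ ∃ α ∈ Icc (0 : ℝ) 1, ∫⁻ x, tailWeight τ α x ∂ν = r := by
  obtain ⟨τ, hτ, hC, hB⟩ := exists_measure_Ioi_le_le_measure_Ici (μ := ν.map (|·|)) (a := 0) hr
    (by rwa [Measure.map_apply measurable_abs measurableSet_Ici, preimage_abs_Ici, Btau_zero])
  rw [Measure.map_apply measurable_abs measurableSet_Ioi, preimage_abs_Ioi] at hC
  rw [Measure.map_apply measurable_abs measurableSet_Ici, preimage_abs_Ici, measure_Btau ν hτ] at hB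
  obtain ⟨α, hα, hcα⟩ := exists_add_ofReal_mul_eq (measure_ne_top ν _) hC hB
  exact ⟨τ, hτ, α, hα, (lintegral_tailWeight ν hτ).trans hcα⟩

variable {p : ℝ}

lemma lintegral_tailWeight_mul_rpow_ne_zero (hp : 0 < p) (hM : momentP p ν ≠ 0) (hτ : 0 ≤ τ)
    (h : ∫⁻ x, tailWeight τ α x ∂ν ≠ 0) :
    ∫⁻ x, tailWeight τ α x * ENNReal.ofReal (|x| ^ p) ∂ν ≠ 0 := by
  rcases hτ.eq_or_lt with rfl | hτ
  · have hzero : ∀ x : ℝ,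
        tailWeight 0 α x * ENNReal.ofReal (|x| ^ p) = ENNReal.ofReal (|x| ^ p) := by
      intro x
      rcases eq_or_ne x 0 with rfl | hx
      · simp [Real.zero_rpow hp.ne']
      · simp [tailWeight, abs_pos.2 hx]
    simpa only [hzero, momentP] using hM
  · have hlow : ENNReal.ofReal (τ ^ p) * ∫⁻ x, tailWeight τ α x ∂ν ≤
        ∫⁻ x, tailWeight τ α x * ENNReal.ofReal (|x| ^ p) ∂ν := by
      rw [← lintegral_const_mul' _ _ ENNReal.ofReal_ne_top]
      refine lintegral_mono fun x ↦ ?_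
      rw [mul_comm]
      by_cases hx : τ ≤ |x|
      · gcongr
      · simp [tailWeight, (not_le.1 hx).not_gt, (not_le.1 hx).ne]
    exact ((pos_iff_ne_zero.2 (mul_ne_zero
      (ENNReal.ofReal_pos.2 (Real.rpow_pos_of_pos hτ p)).ne' h)).trans_le hlow).ne'

end TailWeightIntegral

def tailPoint (p : ℝ) (ν : Measure ℝ) (τ α : ℝ) : ℝ × ℝ :=
  ((∫⁻ x, tailWeight τ α x ∂ν).toReal,
    (1 - ((∫⁻ x, tailWeight τ α x * ENNReal.ofReal (|x| ^ p) ∂ν) / momentP p ν).toReal) ^ (1 / p))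

section TailPoint

variable {p : ℝ} {ν : Measure ℝ} {τ τ' α α' : ℝ}

lemma vP_eq_toReal_div (s : Set ℝ) :
    vP p ν s = (∫⁻ x in s, ENNReal.ofReal (|x| ^ p) ∂ν).toReal / (momentP p ν).toReal := by
  rw [vP, ENNReal.toReal_div]

lemma vP_of_measure_eq_zero {s : Set ℝ} (hs : ν s = 0) : vP p ν s = 0 := by
  rw [vP, setLIntegral_measure_zero _ _ hs, ENNReal.zero_div, ENNReal.toReal_zero]

lemma setLIntegral_rpow_ne_top (hfin : momentP p ν ≠ ∞) (s : Set ℝ) :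
    ∫⁻ x in s, ENNReal.ofReal (|x| ^ p) ∂ν ≠ ∞ :=
  ne_top_of_le_ne_top hfin (setLIntegral_le_lintegral s _)

lemma vP_Btau (hfin : momentP p ν ≠ ∞) (hτ : 0 ≤ τ) :
    vP p ν (Btau τ) = vP p ν (Ctau τ) + vP p ν {-τ, τ} := by
  rw [vP_eq_toReal_div, vP_eq_toReal_div, vP_eq_toReal_div, setLIntegral_Btau ν hτ,
    ENNReal.toReal_add (setLIntegral_rpow_ne_top hfin _) (setLIntegral_rpow_ne_top hfin _),
    add_div]

lemma tailPoint_eq [IsFiniteMeasure ν] (hfin : momentP p ν ≠ ∞) (hτ : 0 ≤ τ) (hα : 0 ≤ α) :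
    tailPoint p ν τ α = ((ν (Ctau τ)).toReal + α * (ν {-τ, τ}).toReal,
      (1 - (vP p ν (Ctau τ) + α * vP p ν {-τ, τ})) ^ (1 / p)) := by
  have hmeas : Measurable fun x : ℝ ↦ ENNReal.ofReal (|x| ^ p) := by fun_prop
  rw [tailPoint, lintegral_tailWeight ν hτ, lintegral_tailWeight_mul ν hτ hmeas,
    ENNReal.toReal_div, vP_eq_toReal_div, vP_eq_toReal_div,
    ENNReal.toReal_add (measure_ne_top _ _) (ENNReal.mul_ne_top ENNReal.ofReal_ne_top
      (measure_ne_top _ _)),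
    ENNReal.toReal_add (setLIntegral_rpow_ne_top hfin _) (ENNReal.mul_ne_top
      ENNReal.ofReal_ne_top (setLIntegral_rpow_ne_top hfin _)),
    ENNReal.toReal_mul, ENNReal.toReal_mul, ENNReal.toReal_ofReal hα, add_div, mul_div_assoc]

lemma tailPoint_one [IsFiniteMeasure ν] (hfin : momentP p ν ≠ ∞) (hτ : 0 ≤ τ) :
    tailPoint p ν τ 1 = (phiTail ν τ, (1 - vP p ν (Btau τ)) ^ (1 / p)) := by
  rw [tailPoint_eq hfin hτ zero_le_one, one_mul, one_mul, phiTail, measure_Btau ν hτ,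
    ENNReal.toReal_add (measure_ne_top _ _) (measure_ne_top _ _), vP_Btau hfin hτ]

lemma tailPoint_eq_tailPoint_one [IsFiniteMeasure ν] (hfin : momentP p ν ≠ ∞) (hτ : 0 ≤ τ)
    (hα : 0 ≤ α) (hν : ν {-τ, τ} = 0) : tailPoint p ν τ α = tailPoint p ν τ 1 := by
  simp only [tailPoint_eq hfin hτ hα, tailPoint_eq hfin hτ zero_le_one, hν,
    vP_of_measure_eq_zero hν, ENNReal.toReal_zero, mul_zero]

lemma Fgraph_eq_image [IsFiniteMeasure ν] (hfin : momentP p ν ≠ ∞) :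
    Fgraph p ν = Function.uncurry (tailPoint p ν) '' (Ici (0 : ℝ) ×ˢ Icc (0 : ℝ) 1) := by
  ext q
  constructor
  · rintro (⟨τ, hτ, rfl⟩ | ⟨τ, hτ, -, α, hα, rfl⟩)
    · exact ⟨(τ, 1), ⟨hτ, zero_le_one, le_rfl⟩, tailPoint_one hfin hτ⟩
    · exact ⟨(τ, α), ⟨hτ, hα.1, hα.2.le⟩, by
        rw [Function.uncurry_apply_pair, tailPoint_eq hfin hτ hα.1, sub_sub]⟩
  · rintro ⟨⟨τ, α⟩, ⟨hτ, hα₀, hα₁⟩, rfl⟩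
    by_cases h : α = 1 ∨ ν {-τ, τ} = 0
    · refine .inl ⟨τ, hτ, ?_⟩
      rw [Function.uncurry_apply_pair, ← tailPoint_one hfin hτ]
      rcases h with rfl | h
      exacts [rfl, tailPoint_eq_tailPoint_one hfin hτ hα₀ h]
    · rw [not_or] at h
      exact .inr ⟨τ, hτ, ENNReal.toReal_pos h.2 (measure_ne_top _ _), α,
        ⟨hα₀, hα₁.lt_of_ne h.1⟩, by
          rw [Function.uncurry_apply_pair, tailPoint_eq hfin hτ hα₀, sub_sub]⟩

lemma tailPoint_snd_eq_of_fst_eq [IsFiniteMeasure ν] (hα : α ≤ 1) (hα' : α' ≤ 1)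
    (h : (tailPoint p ν τ α).1 = (tailPoint p ν τ' α').1) :
    (tailPoint p ν τ α).2 = (tailPoint p ν τ' α').2 := by
  have hI := (ENNReal.toReal_eq_toReal_iff' (lintegral_tailWeight_ne_top hα)
    (lintegral_tailWeight_ne_top hα')).1 h
  simp only [tailPoint, lintegral_tailWeight_mul_congr hα hα' hI]

lemma tailPoint_snd_mem_Ico (hp : 0 < p) (hM₀ : momentP p ν ≠ 0) (hM : momentP p ν ≠ ∞)
    (hτ : 0 ≤ τ) (hα : α ≤ 1) (h : ∫⁻ x, tailWeight τ α x ∂ν ≠ 0) :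
    (tailPoint p ν τ α).2 ∈ Ico 0 1 := by
  set I := ∫⁻ x, tailWeight τ α x * ENNReal.ofReal (|x| ^ p) ∂ν
  have hI : I ≤ momentP p ν :=
    lintegral_mono fun x ↦ mul_le_of_le_one_left' (tailWeight_le_one hα x)
  have hV₁ : (I / momentP p ν).toReal ≤ 1 := ENNReal.toReal_le_of_le_ofReal zero_le_one
    (by rw [ENNReal.ofReal_one]; exact ENNReal.div_le_of_le_mul (by rwa [one_mul]))
  have hV₀ : 0 < (I / momentP p ν).toReal :=
    ENNReal.toReal_pos (ENNReal.div_pos_iff.2 ⟨lintegral_tailWeight_mul_rpow_ne_zero hp hM₀ hτ h,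
      hM⟩).ne' (ENNReal.div_ne_top (ne_top_of_le_ne_top hM hI) hM₀)
  exact ⟨Real.rpow_nonneg (by linarith) _,
    Real.rpow_lt_one (by linarith) (by linarith) (by positivity)⟩

end TailPoint

/-- Proposition 2: the set of pairs `F_ν` is the graph of a function from `(0,1]` to `[0,1)`:
each `r ∈ (0,1]` is matched with exactly one `d ∈ [0,1)`. -/
theorem Fgraph_is_function
    (p : ℝ) (hp : 0 < p) (ν : Measure ℝ) [IsProbabilityMeasure ν]
    (hmom0 : 0 < momentP p ν) (hmomfin : momentP p ν < ∞) :
    ∀ r ∈ Set.Ioc (0:ℝ) 1, ∃ d ∈ Set.Ico (0:ℝ) 1,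
      (r, d) ∈ Fgraph p ν ∧ ∀ d' : ℝ, (r, d') ∈ Fgraph p ν → d' = d := by
  rintro r ⟨hr₀, hr₁⟩
  obtain ⟨τ, hτ, α, hα, hr⟩ := exists_lintegral_tailWeight_eq ν (ENNReal.ofReal_pos.2 hr₀)
    (by rwa [measure_univ, ENNReal.ofReal_le_one])
  have hfst : (tailPoint p ν τ α).1 = r := by
    simp only [tailPoint, hr, ENNReal.toReal_ofReal hr₀.le]
  rw [Fgraph_eq_image hmomfin.ne]
  refine ⟨(tailPoint p ν τ α).2, tailPoint_snd_mem_Ico hp hmom0.ne' hmomfin.ne hτ hα.2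
    (hr ▸ (ENNReal.ofReal_pos.2 hr₀).ne'), ⟨(τ, α), ⟨hτ, hα⟩, Prod.ext hfst rfl⟩, ?_⟩
  rintro d' ⟨⟨τ', α'⟩, ⟨-, hα'⟩, hq⟩
  have hfst' : (tailPoint p ν τ' α').1 = r := congrArg Prod.fst hq
  have hsnd' : (tailPoint p ν τ' α').2 = d' := congrArg Prod.snd hq
  rw [← hsnd']
  exact tailPoint_snd_eq_of_fst_eq hα'.2 hα.2 (hfst'.trans hfst.symm)

end
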